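/- arXiv:1807.09325 — 5 statements merged into one kernel-verified Lean document; each statement's English description precedes it below -/
import Mathlib

section
/- Let T be a nonnegative random variable with finite second moment and let ξ be an independent exponential random variable with rate λ > 0. Then the average age of information under the drop-new-packet (DNP) scheme, defined as a_DNP = E[T] + (1/2)·E[(T+ξ)²]/E[T+ξ], equals E[T] + 1/λ + (E[T²]/(2E[T]))·(ρ/(1+ρ)), where ρ = λ E[T]. -/
open MeasureTheory ProbabilityTheory Real Set
open scoped Nat

/-! The exponential law is the Gamma law of shape 1, whose moments `Γ(a + n) / (Γ(a) rⁿ)` come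
from the Gamma integral; so `E[ξ] = 1/λ` and `E[ξ²] = 2/λ²`. Independence makes the cross term of
`E[(T + ξ)²]` equal to `2 E[T] E[ξ]`, and the formula is then an identity of rational functions in
`E[T]`, `E[T²]` and `λ`. -/

lemma integrableOn_rpow_mul_exp_neg_mul_Ioi {a r : ℝ} (ha : 0 < a) (hr : 0 < r) :
    IntegrableOn (fun x ↦ x ^ (a - 1) * exp (-(r * x))) (Ioi 0) :=
  .of_integral_ne_zero (by rw [integral_rpow_mul_exp_neg_mul_Ioi ha hr]; positivity)

namespace ProbabilityTheory

lemma measurable_gammaPDF (a r : ℝ) : Measurable (gammaPDF a r) :=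
  (measurable_gammaPDFReal a r).ennreal_ofReal

section GammaMoments

variable {a r : ℝ}

lemma integrable_gammaMeasure_iff (ha : 0 < a) (hr : 0 < r) {f : ℝ → ℝ} :
    Integrable f (gammaMeasure a r) ↔ Integrable (fun x ↦ gammaPDFReal a r x * f x) := by
  rw [gammaMeasure, integrable_withDensity_iff_integrable_smul' (measurable_gammaPDF a r)
    (ae_of_all _ fun _ ↦ ENNReal.ofReal_lt_top)]
  simp [gammaPDF, ENNReal.toReal_ofReal (gammaPDFReal_nonneg ha hr _)]

lemma integral_gammaMeasure_eq (ha : 0 < a) (hr : 0 < r) (f : ℝ → ℝ) :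
    ∫ x, f x ∂gammaMeasure a r = ∫ x, gammaPDFReal a r x * f x := by
  rw [gammaMeasure, integral_withDensity_eq_integral_toReal_smul (measurable_gammaPDF a r)
    (ae_of_all _ fun _ ↦ ENNReal.ofReal_lt_top)]
  simp [gammaPDF, ENNReal.toReal_ofReal (gammaPDFReal_nonneg ha hr _)]

lemma gammaPDFReal_mul_pow_of_pos {x : ℝ} (hx : 0 < x) (n : ℕ) :
    gammaPDFReal a r x * x ^ n = r ^ a / Gamma a * (x ^ (a + n - 1) * exp (-(r * x))) := by
  rw [gammaPDFReal, if_pos hx.le, ← rpow_natCast, show a + n - 1 = a - 1 + n by ring,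
    rpow_add hx]
  ring

lemma gammaPDFReal_mul_pow_eq_zero_of_neg {x : ℝ} (hx : x < 0) (n : ℕ) :
    gammaPDFReal a r x * x ^ n = 0 := by
  simp [gammaPDFReal, hx.not_ge]

lemma integrable_pow_gammaMeasure (ha : 0 < a) (hr : 0 < r) (n : ℕ) :
    Integrable (fun x ↦ x ^ n) (gammaMeasure a r) := by
  have hsupp : (fun x ↦ gammaPDFReal a r x * x ^ n).support ⊆ Ici 0 := fun x hx ↦
    not_lt.mp fun hneg ↦ hx (gammaPDFReal_mul_pow_eq_zero_of_neg hneg n)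
  rw [integrable_gammaMeasure_iff ha hr, ← integrableOn_iff_integrable_of_support_subset hsupp,
    integrableOn_Ici_iff_integrableOn_Ioi]
  have hΓ := (integrableOn_rpow_mul_exp_neg_mul_Ioi (by positivity : 0 < a + n) hr).const_mul
    (r ^ a / Gamma a)
  exact IntegrableOn.congr_fun hΓ (fun x hx ↦ (gammaPDFReal_mul_pow_of_pos hx n).symm)
    measurableSet_Ioi

lemma integral_pow_gammaMeasure (ha : 0 < a) (hr : 0 < r) (n : ℕ) :
    ∫ x, x ^ n ∂gammaMeasure a r = Gamma (a + n) / (Gamma a * r ^ n) := by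
  have hsupp : ∀ x ∉ Ici 0, gammaPDFReal a r x * x ^ n = 0 := fun x hx ↦
    gammaPDFReal_mul_pow_eq_zero_of_neg (not_le.mp hx) n
  rw [integral_gammaMeasure_eq ha hr, ← setIntegral_eq_integral_of_forall_compl_eq_zero hsupp,
    integral_Ici_eq_integral_Ioi, setIntegral_congr_fun measurableSet_Ioi
      (fun x hx ↦ gammaPDFReal_mul_pow_of_pos hx n),
    integral_const_mul, integral_rpow_mul_exp_neg_mul_Ioi (by positivity) hr,
    div_rpow zero_le_one hr.le, one_rpow, rpow_add hr, rpow_natCast]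
  have := (Gamma_pos_of_pos ha).ne'
  field_simp

lemma integrable_pow_expMeasure (hr : 0 < r) (n : ℕ) :
    Integrable (fun x ↦ x ^ n) (expMeasure r) :=
  integrable_pow_gammaMeasure one_pos hr n

lemma integral_pow_expMeasure (hr : 0 < r) (n : ℕ) :
    ∫ x, x ^ n ∂expMeasure r = n ! / r ^ n := by
  rw [expMeasure, integral_pow_gammaMeasure one_pos hr, add_comm, Gamma_nat_eq_factorial,
    Gamma_one, one_mul]

end GammaMoments

section

variable {Ω : Type*} {mΩ : MeasurableSpace Ω} {P : Measure Ω} {X Y : Ω → ℝ}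

lemma HasLaw.memLp_two_of_expMeasure {r : ℝ} (hr : 0 < r) (hX : HasLaw X (expMeasure r) P) :
    MemLp X 2 P :=
  (memLp_two_iff_integrable_sq hX.aemeasurable.aestronglyMeasurable).2
    ((hX.map_eq ▸ integrable_pow_expMeasure hr 2).comp_aemeasurable hX.aemeasurable)

lemma HasLaw.integral_pow_of_expMeasure {r : ℝ} (hr : 0 < r) (hX : HasLaw X (expMeasure r) P)
    (n : ℕ) : ∫ ω, X ω ^ n ∂P = n ! / r ^ n := by
  rw [← integral_pow_expMeasure hr n, ← hX.integral_comp (by fun_prop)]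
  rfl

lemma IndepFun.integral_add_sq [IsFiniteMeasure P] (hXY : IndepFun X Y P) (hX : MemLp X 2 P)
    (hY : MemLp Y 2 P) :
    ∫ ω, (X ω + Y ω) ^ 2 ∂P
      = ∫ ω, X ω ^ 2 ∂P + 2 * ((∫ ω, X ω ∂P) * ∫ ω, Y ω ∂P) + ∫ ω, Y ω ^ 2 ∂P := by
  have hcross : Integrable (fun ω ↦ 2 * (X ω * Y ω)) P :=
    (hXY.integrable_mul (hX.integrable one_le_two) (hY.integrable one_le_two)).const_mul 2
  simp_rw [add_sq, mul_assoc]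
  rw [integral_add (f := fun ω ↦ X ω ^ 2 + 2 * (X ω * Y ω)) (hX.integrable_sq.add hcross)
      hY.integrable_sq,
    integral_add hX.integrable_sq hcross, integral_const_mul,
    hXY.integral_fun_mul_eq_mul_integral hX.aestronglyMeasurable hY.aestronglyMeasurable]

end

end ProbabilityTheory

theorem aaoi_dnp_general
    {Ω : Type} [MeasureSpace Ω] [IsProbabilityMeasure (ℙ : Measure Ω)]
    {l : ℝ} (hl : 0 < l)
    (T ξ : Ω → ℝ)
    (hTm : Measurable T)
    (hT2 : Integrable (fun ω => (T ω) ^ 2) ℙ)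
    (hξexp : Measure.map ξ ℙ = expMeasure l)
    (hindep : IndepFun T ξ ℙ)
    (hETpos : 0 < ∫ ω, T ω ∂ℙ) :
    (∫ ω, T ω ∂ℙ) + (1 / 2) * (∫ ω, (T ω + ξ ω) ^ 2 ∂ℙ) / (∫ ω, (T ω + ξ ω) ∂ℙ)
      = (∫ ω, T ω ∂ℙ) + 1 / l
        + ((∫ ω, (T ω) ^ 2 ∂ℙ) / (2 * ∫ ω, T ω ∂ℙ))
          * ((l * ∫ ω, T ω ∂ℙ) / (1 + l * ∫ ω, T ω ∂ℙ)) := by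
  -- `Measure.map` along a non-a.e.-measurable map is `0`, so the law of `ξ` forces measurability.
  have hξ : HasLaw ξ (expMeasure l) ℙ :=
    ⟨.of_map_ne_zero (hξexp ▸ (isProbabilityMeasure_expMeasure hl).ne_zero), hξexp⟩
  have hT : MemLp T 2 ℙ := (memLp_two_iff_integrable_sq hTm.aestronglyMeasurable).2 hT2
  have hξ2 := hξ.memLp_two_of_expMeasure hl
  have hEξ : ∫ ω, ξ ω ∂ℙ = 1 / l := by simpa using hξ.integral_pow_of_expMeasure hl 1
  have hEξ2 : ∫ ω, ξ ω ^ 2 ∂ℙ = 2 / l ^ 2 := by simpa using hξ.integral_pow_of_expMeasure hl 2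
  rw [hindep.integral_add_sq hT hξ2, integral_add (hT.integrable one_le_two)
    (hξ2.integrable one_le_two), hEξ, hEξ2]
  have := hETpos.ne'
  have := hl.ne'
  field_simp
  ring

/-- AAoI of the DNP scheme:
`E[T] + (1/2)·E[(T+ξ)²]/E[T+ξ] = E[T] + 1/λ + (E[T²]/(2E[T]))·(ρ/(1+ρ))`, `ρ = λE[T]`. -/
theorem aaoi_dnp
    {Ω : Type} [MeasureSpace Ω] [IsProbabilityMeasure (ℙ : Measure Ω)]
    {l : ℝ} (hl : 0 < l)
    (T ξ : Ω → ℝ) (hT0 : ∀ ω, 0 ≤ T ω)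
    (hTm : Measurable T) (hξm : Measurable ξ)
    (hT2 : Integrable (fun ω => (T ω) ^ 2) ℙ)
    (hξexp : Measure.map ξ ℙ = expMeasure l)
    (hindep : IndepFun T ξ ℙ)
    (hETpos : 0 < ∫ ω, T ω ∂ℙ) :
    (∫ ω, T ω ∂ℙ) + (1 / 2) * (∫ ω, (T ω + ξ ω) ^ 2 ∂ℙ) / (∫ ω, (T ω + ξ ω) ∂ℙ)
      = (∫ ω, T ω ∂ℙ) + 1 / l
        + ((∫ ω, (T ω) ^ 2 ∂ℙ) / (2 * ∫ ω, T ω ∂ℙ))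
          * ((l * ∫ ω, T ω ∂ℙ) / (1 + l * ∫ ω, T ω ∂ℙ)) :=
  aaoi_dnp_general hl T ξ hTm hT2 hξexp hindep hETpos
end

section
/- Let T be a nonnegative random variable and ξ an independent Exp(λ) random variable, with γ := P(T ≤ ξ) = E[e^{-λT}] > 0. Let Γ be the random time to complete one transfer under the drop-old-packet scheme, satisfying the distributional fixed point Γ = T·1{ξ' > T} + (ξ' + Γ')·1{ξ' ≤ T} where ξ' ~ Exp(λ) and Γ' is an independent copy of Γ, all independent of T. Then E[Γ] = (1 − γ)/(λγ). -/
/-!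
Split according to whether the exponential clock `ξ'` rings after `T`:
`Γ = min T ξ' + Γ' · 1{ξ' ≤ T}`, where `Γ'` is independent of `(T, ξ')` and distributed as `Γ`.
Taking expectations gives the renewal equation `E Γ = E (min T ξ') + E Γ · P(ξ' ≤ T)`.
Conditionally on `T = t ≥ 0` one has `P(ξ' ≤ t) = 1 - e^{-λt}` and `E (min t ξ') = (1 - e^{-λt})/λ`,
so `P(ξ' ≤ T) = 1 - γ`, `E (min T ξ') = (1 - γ)/λ`, and `E Γ = ((1 - γ)/λ)/γ`.
-/

open MeasureTheory ProbabilityTheory Real Set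

section Exponential

variable {l t : ℝ}

lemma measureReal_Iic_expMeasure (hl : 0 < l) (ht : 0 ≤ t) :
    (expMeasure l).real (Iic t) = 1 - exp (-(l * t)) := by
  have := isProbabilityMeasure_expMeasure hl
  rw [← cdf_eq_real, cdf_expMeasure_eq hl, if_pos ht]

lemma integral_indicator_Iic_expMeasure (hl : 0 < l) (ht : 0 ≤ t) :
    ∫ x, (Iic t).indicator 1 x ∂expMeasure l = 1 - exp (-(l * t)) := by
  rw [integral_indicator_one measurableSet_Iic, measureReal_Iic_expMeasure hl ht]

lemma ae_nonneg_expMeasure : ∀ᵐ x ∂expMeasure l, 0 ≤ x := by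
  rw [ae_iff]
  simp only [not_le]
  show volume.withDensity (exponentialPDF l) (Iio 0) = 0
  rw [withDensity_apply _ measurableSet_Iio, lintegral_exponentialPDF_of_nonpos le_rfl]

lemma setIntegral_Iic_expMeasure (hl : 0 < l) (ht : 0 ≤ t) :
    ∫ x in Iic t, x ∂expMeasure l = 1 / l - (t + 1 / l) * exp (-(l * t)) := by
  have hderiv : ∀ x ∈ uIcc 0 t,
      HasDerivAt (fun y => (y + 1 / l) * -exp (-(l * y))) (l * exp (-(l * x)) * x) x :=
    fun x _ => ((hasDerivAt_id' x).add_const (1 / l)).fun_mul hasDerivAt_neg_exp_mul_exp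
      |>.congr_deriv (by field_simp; ring)
  show ∫ x in Iic t, x ∂volume.withDensity (exponentialPDF l) = _
  rw [restrict_withDensity measurableSet_Iic,
    integral_withDensity_eq_integral_toReal_smul (f := exponentialPDF l)
      (measurable_exponentialPDFReal l).ennreal_ofReal
      (ae_of_all _ fun _ => ENNReal.ofReal_lt_top),
    setIntegral_eq_of_subset_of_forall_sdiff_eq_zero measurableSet_Iic Ioc_subset_Iic_self
      (fun x hx => ?_), ← intervalIntegral.integral_of_le ht,
    intervalIntegral.integral_congr (g := fun x => l * exp (-(l * x)) * x) (fun x hx => ?_),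
    intervalIntegral.integral_eq_sub_of_hasDerivAt hderiv
      ((by fun_prop : Continuous _).intervalIntegrable _ _)]
  · simp
    ring
  · rw [uIcc_of_le ht] at hx
    rw [exponentialPDF_of_nonneg hx.1, ENNReal.toReal_ofReal (by positivity), smul_eq_mul]
  · have hx0 : x ≤ 0 := by
      by_contra! h
      exact hx.2 ⟨h, hx.1⟩
    rcases hx0.lt_or_eq with hneg | rfl
    · simp [exponentialPDF_of_neg hneg]
    · simp

lemma integral_min_expMeasure (hl : 0 < l) (ht : 0 ≤ t) :
    ∫ x, min t x ∂expMeasure l = (1 - exp (-(l * t))) / l := by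
  have := isProbabilityMeasure_expMeasure hl
  have hint : Integrable (fun x => min t x) (expMeasure l) := by
    refine .of_bound (by fun_prop) t ?_
    filter_upwards [ae_nonneg_expMeasure] with x hx
    rw [Real.norm_of_nonneg (le_min ht hx)]
    exact min_le_left t x
  rw [← integral_add_compl measurableSet_Iic hint, compl_Iic,
    setIntegral_congr_fun measurableSet_Iic (fun x (hx : x ≤ t) => min_eq_right hx),
    setIntegral_congr_fun measurableSet_Ioi (fun x (hx : t < x) => min_eq_left hx.le),
    setIntegral_Iic_expMeasure hl ht, setIntegral_const, ← compl_Iic,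
    probReal_compl_eq_one_sub measurableSet_Iic, measureReal_Iic_expMeasure hl ht, smul_eq_mul]
  field_simp
  ring

end Exponential

lemma stronglyMeasurable_indicator_Iic_fst :
    StronglyMeasurable fun p : ℝ × ℝ => (Iic p.1).indicator (1 : ℝ → ℝ) p.2 :=
  stronglyMeasurable_one.indicator (measurableSet_le measurable_snd measurable_fst)

section Independence

variable {Ω : Type*} [MeasurableSpace Ω] {μ : Measure Ω}

theorem ProbabilityTheory.IndepFun.integral_comp_prodMk {α β : Type*} [MeasurableSpace α]
    [MeasurableSpace β] [IsFiniteMeasure μ] {X : Ω → α} {Y : Ω → β} (hXY : IndepFun X Y μ)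
    (hX : Measurable X) (hY : Measurable Y) {h : α × β → ℝ} (hh : StronglyMeasurable h)
    (hint : Integrable (fun ω => h (X ω, Y ω)) μ) :
    ∫ ω, h (X ω, Y ω) ∂μ = ∫ ω, ∫ y, h (X ω, y) ∂(μ.map Y) ∂μ := by
  have hmap := (indepFun_iff_map_prod_eq_prod_map_map hX.aemeasurable hY.aemeasurable).mp hXY
  have hint' : Integrable h ((μ.map X).prod (μ.map Y)) := by
    rwa [← hmap, integrable_map_measure hh.aestronglyMeasurable (hX.prodMk hY).aemeasurable]
  rw [← integral_map (hX.prodMk hY).aemeasurable hh.aestronglyMeasurable, hmap,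
    integral_prod h hint']
  exact integral_map hX.aemeasurable hh.integral_prod_right'.aestronglyMeasurable

theorem integral_eq_div_of_eq_add_mul {F G Γ Γ' : Ω → ℝ} (hfix : ∀ ω, Γ ω = F ω + Γ' ω * G ω)
    (hF : Integrable F μ) (hΓ : Integrable Γ μ) (hG : AEStronglyMeasurable G μ)
    (hcopy : IdentDistrib Γ' Γ μ μ) (hind : IndepFun Γ' G μ) (hG1 : ∫ ω, G ω ∂μ ≠ 1) :
    ∫ ω, Γ ω ∂μ = (∫ ω, F ω ∂μ) / (1 - ∫ ω, G ω ∂μ) := by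
  have hΓ'G : Integrable (fun ω => Γ' ω * G ω) μ :=
    (hΓ.sub hF).congr (ae_of_all _ fun ω => by simp [hfix ω])
  have key : ∫ ω, Γ ω ∂μ = ∫ ω, F ω ∂μ + (∫ ω, Γ ω ∂μ) * ∫ ω, G ω ∂μ := by
    calc ∫ ω, Γ ω ∂μ = ∫ ω, (F ω + Γ' ω * G ω) ∂μ := integral_congr_ae (ae_of_all _ hfix)
      _ = ∫ ω, F ω ∂μ + (∫ ω, Γ' ω ∂μ) * ∫ ω, G ω ∂μ := by
        rw [integral_add hF hΓ'G]
        exact congrArg _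
          (hind.integral_mul_eq_mul_integral hcopy.aemeasurable_fst.aestronglyMeasurable hG)
      _ = ∫ ω, F ω ∂μ + (∫ ω, Γ ω ∂μ) * ∫ ω, G ω ∂μ := by rw [hcopy.integral_eq]
  rw [eq_div_iff (sub_ne_zero.mpr hG1.symm)]
  linarith

variable {T ξ : Ω → ℝ}

theorem integrable_min_of_nonneg (hT0 : ∀ ω, 0 ≤ T ω) (hTint : Integrable T μ)
    (hξ : AEStronglyMeasurable ξ μ) (hξ0 : ∀ᵐ ω ∂μ, 0 ≤ ξ ω) :
    Integrable (fun ω => min (T ω) (ξ ω)) μ := by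
  refine hTint.mono' (hTint.aestronglyMeasurable.inf hξ) ?_
  filter_upwards [hξ0] with ω hω
  rw [norm_of_nonneg (le_min (hT0 ω) hω)]
  exact min_le_left _ _

variable [IsProbabilityMeasure μ] {l : ℝ}

theorem integral_one_sub_exp_neg_mul (hT : Measurable T) (hlT : ∀ ω, 0 ≤ l * T ω) :
    ∫ ω, (1 - exp (-(l * T ω))) ∂μ = 1 - ∫ ω, exp (-(l * T ω)) ∂μ := by
  have hint : Integrable (fun ω => exp (-(l * T ω))) μ := by
    refine .of_bound (by fun_prop) 1 (ae_of_all _ fun ω => ?_)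
    rw [norm_of_nonneg (exp_nonneg _), exp_le_one_iff, neg_nonpos]
    exact hlT ω
  rw [integral_sub (integrable_const 1) hint, integral_const, probReal_univ, one_smul]

theorem integral_min_of_indepFun_expMeasure (hl : 0 < l) (hT0 : ∀ ω, 0 ≤ T ω)
    (hT : Measurable T) (hξ : Measurable ξ) (hTint : Integrable T μ)
    (hξexp : μ.map ξ = expMeasure l) (hTξ : IndepFun T ξ μ) :
    ∫ ω, min (T ω) (ξ ω) ∂μ = (1 - ∫ ω, exp (-(l * T ω)) ∂μ) / l := by
  rw [hTξ.integral_comp_prodMk hT hξ (h := fun p => min p.1 p.2) (by fun_prop)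
    (integrable_min_of_nonneg hT0 hTint hξ.aestronglyMeasurable
      (ae_of_ae_map hξ.aemeasurable (hξexp ▸ ae_nonneg_expMeasure))), hξexp]
  simp_rw [integral_min_expMeasure hl (hT0 _)]
  rw [integral_div, integral_one_sub_exp_neg_mul hT fun ω => mul_nonneg hl.le (hT0 ω)]

theorem integral_indicator_Iic_of_indepFun_expMeasure (hl : 0 < l) (hT0 : ∀ ω, 0 ≤ T ω)
    (hT : Measurable T) (hξ : Measurable ξ) (hξexp : μ.map ξ = expMeasure l)
    (hTξ : IndepFun T ξ μ) :
    ∫ ω, (Iic (T ω)).indicator (1 : ℝ → ℝ) (ξ ω) ∂μ = 1 - ∫ ω, exp (-(l * T ω)) ∂μ := by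
  have hint : Integrable (fun ω => (Iic (T ω)).indicator (1 : ℝ → ℝ) (ξ ω)) μ :=
    .of_bound (stronglyMeasurable_indicator_Iic_fst.measurable.comp
        (hT.prodMk hξ)).aestronglyMeasurable 1
      (ae_of_all _ fun ω => by simpa using norm_indicator_le_norm_self (1 : ℝ → ℝ) (ξ ω))
  rw [hTξ.integral_comp_prodMk hT hξ stronglyMeasurable_indicator_Iic_fst hint, hξexp]
  simp_rw [integral_indicator_Iic_expMeasure hl (hT0 _)]
  exact integral_one_sub_exp_neg_mul hT fun ω => mul_nonneg hl.le (hT0 ω)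

end Independence

/-- first moment of the DOP completion time `Γ` from the distributional
fixed point `Γ = T·1{ξ' > T} + (ξ' + Γ')·1{ξ' ≤ T}`: `E[Γ] = (1−γ)/(λγ)`. -/
theorem dop_gamma_first_moment
    {Ω : Type} [MeasureSpace Ω] [IsProbabilityMeasure (ℙ : Measure Ω)]
    {l : ℝ} (hl : 0 < l)
    (T ξ' Γ Γ' : Ω → ℝ) (hT0 : ∀ ω, 0 ≤ T ω)
    (hTm : Measurable T) (hξm : Measurable ξ') (hΓm : Measurable Γ) (hΓ'm : Measurable Γ')
    (hξexp : Measure.map ξ' ℙ = expMeasure l)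
    (hcopy : Measure.map Γ' ℙ = Measure.map Γ ℙ)
    (hindep : iIndepFun ![T, ξ', Γ'] ℙ)
    (hTint : Integrable T ℙ) (hΓint : Integrable Γ ℙ)
    (hfix : ∀ ω, Γ ω = (if T ω < ξ' ω then T ω else ξ' ω + Γ' ω))
    (hγpos : 0 < ∫ ω, Real.exp (-(l * T ω)) ∂ℙ) :
    (∫ ω, Γ ω ∂ℙ)
      = (1 - ∫ ω, Real.exp (-(l * T ω)) ∂ℙ) / (l * ∫ ω, Real.exp (-(l * T ω)) ∂ℙ) := by
  have hTξ : IndepFun T ξ' ℙ := by simpa using hindep.indepFun (i := 0) (j := 1) (by decide)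
  have hΓ'indep : IndepFun Γ' (fun ω => (Iic (T ω)).indicator (1 : ℝ → ℝ) (ξ' ω)) ℙ := by
    have h := hindep.indepFun_prodMk (fun i => by fin_cases i <;> assumption) 0 1 2
      (by decide) (by decide)
    exact ((by simpa using h : IndepFun (fun ω => (T ω, ξ' ω)) Γ' ℙ).comp
      stronglyMeasurable_indicator_Iic_fst.measurable measurable_id).symm
  have hsplit ω :
      Γ ω = min (T ω) (ξ' ω) + Γ' ω * (Iic (T ω)).indicator (1 : ℝ → ℝ) (ξ' ω) := by
    rcases lt_or_ge (T ω) (ξ' ω) with h | h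
    · simp [hfix ω, h, h.le, not_le.mpr h]
    · simp [hfix ω, h, not_lt.mpr h]
  have hξ0 : ∀ᵐ ω ∂ℙ, 0 ≤ ξ' ω := ae_of_ae_map hξm.aemeasurable (hξexp ▸ ae_nonneg_expMeasure)
  have hP := integral_indicator_Iic_of_indepFun_expMeasure hl hT0 hTm hξm hξexp hTξ
  rw [integral_eq_div_of_eq_add_mul hsplit
      (integrable_min_of_nonneg hT0 hTint hξm.aestronglyMeasurable hξ0) hΓint
      (stronglyMeasurable_indicator_Iic_fst.measurable.comp (hTm.prodMk hξm)).aestronglyMeasurable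
      ⟨hΓ'm.aemeasurable, hΓm.aemeasurable, hcopy⟩ hΓ'indep (by rw [hP]; linarith),
    integral_min_of_indepFun_expMeasure hl hT0 hTm hξm hTint hξexp hTξ, hP, sub_sub_cancel,
    div_div]
end

section
/- With the setup of the DOP fixed-point equation (Γ = T·1{ξ > T} + (ξ + Γ')·1{ξ ≤ T}, γ = E[e^{-λT}] > 0, and assuming E[Γ²] < ∞), the second moment satisfies E[Γ²] = 2(1 − γ)/(λ²γ²) − 2E[T e^{-λT}]/(λγ²). -/
/-!
Put `A = 1{ξ ≤ T}`. Pointwise, `Γ = min ξ T + A Γ'`, and `(min ξ T, A)` is independent of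
`Γ' ~ Γ`, so taking first and second moments gives two linear equations
`E Γ = E[min ξ T] + E[A] E Γ` and `E Γ² = E[(min ξ T)²] + 2 E[A min ξ T] E Γ + E[A] E Γ²`.
Integrating first in `ξ ~ Exp(λ)` with `T = t` fixed, each coefficient is an elementary integral
over `[0, t]` of the form `a + b e^{-λt} + c t e^{-λt}`, so integrating in `T` expresses it
through `γ` and `E[T e^{-λT}]`. Solving the two equations gives the formula.
-/

open MeasureTheory ProbabilityTheory Real

lemma mul_exp_neg_mul_le {l : ℝ} (hl : 0 < l) (t : ℝ) : t * exp (-(l * t)) ≤ 1 / l := by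
  rw [exp_neg, ← div_eq_mul_inv, div_le_div_iff₀ (exp_pos _) hl]
  nlinarith [add_one_le_exp (l * t)]

lemma measurable_uncurry_ite_le :
    Measurable (Function.uncurry fun t x : ℝ => if x ≤ t then (1 : ℝ) else 0) :=
  Measurable.ite (measurableSet_le measurable_snd measurable_fst) measurable_const measurable_const

lemma ite_lt_eq_min_add_ite_le_mul (t x g : ℝ) :
    (if t < x then t else x + g) = min x t + (if x ≤ t then 1 else 0) * g := by
  by_cases h : t < x
  · simp [h, h.le, not_le.2 h]
  · simp [h, not_lt.1 h]

namespace ProbabilityTheory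

section ExpMeasure

variable {l t : ℝ}

lemma integral_expMeasure (hl : 0 < l) (g : ℝ → ℝ) :
    ∫ x, g x ∂expMeasure l = ∫ x, exponentialPDFReal l x * g x := by
  rw [expMeasure, gammaMeasure, integral_withDensity_eq_integral_toReal_smul (f := gammaPDF 1 l)
    (measurable_gammaPDFReal 1 l).ennreal_ofReal (ae_of_all _ fun _ => ENNReal.ofReal_lt_top)]
  simp [gammaPDF, ENNReal.toReal_ofReal (gammaPDFReal_nonneg one_pos hl _), exponentialPDFReal]

lemma integrable_expMeasure_iff (hl : 0 < l) {g : ℝ → ℝ} :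
    Integrable g (expMeasure l) ↔ Integrable (fun x => exponentialPDFReal l x * g x) := by
  rw [expMeasure, gammaMeasure, integrable_withDensity_iff_integrable_smul' (f := gammaPDF 1 l)
    (measurable_gammaPDFReal 1 l).ennreal_ofReal (ae_of_all _ fun _ => ENNReal.ofReal_lt_top)]
  simp only [gammaPDF, ENNReal.toReal_ofReal (gammaPDFReal_nonneg one_pos hl _), smul_eq_mul]
  rfl

lemma exponentialPDFReal_mul_ite_le (g : ℝ → ℝ) (x : ℝ) :
    exponentialPDFReal l x * (if x ≤ t then g x else 0)
      = (Set.Icc 0 t).indicator (fun x => g x * (l * exp (-(l * x)))) x := by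
  rw [exponentialPDFReal, gammaPDFReal]
  by_cases h0 : 0 ≤ x <;> by_cases ht : x ≤ t <;> simp [h0, ht, Set.indicator, mul_comm]

lemma integrable_ite_le_expMeasure (hl : 0 < l) {g : ℝ → ℝ} (hg : Continuous g) :
    Integrable (fun x => if x ≤ t then g x else 0) (expMeasure l) := by
  simp only [integrable_expMeasure_iff hl, exponentialPDFReal_mul_ite_le]
  exact (integrable_indicator_iff measurableSet_Icc).2 (by fun_prop : Continuous _).integrableOn_Icc

lemma integral_ite_le_expMeasure (hl : 0 < l) (ht : 0 ≤ t) (g : ℝ → ℝ) :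
    ∫ x, (if x ≤ t then g x else 0) ∂expMeasure l = ∫ x in 0..t, g x * (l * exp (-(l * x))) := by
  simp only [integral_expMeasure hl, exponentialPDFReal_mul_ite_le]
  rw [integral_indicator measurableSet_Icc, integral_Icc_eq_integral_Ioc,
    intervalIntegral.integral_of_le ht]

lemma integral_ite_le_expMeasure_of_hasDerivAt (hl : 0 < l) (ht : 0 ≤ t) {q q' : ℝ → ℝ}
    (hq : ∀ x, HasDerivAt q (q' x) x) (hq' : Continuous q') (c : ℝ) :
    ∫ x, (if x ≤ t then q x - q' x / l else c) ∂expMeasure l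
      = q 0 - exp (-(l * t)) * (q t - c) := by
  have := isProbabilityMeasure_expMeasure hl
  have hqc : Continuous q := continuous_iff_continuousAt.2 fun x => (hq x).continuousAt
  have hF : ∀ x, HasDerivAt (fun y => -exp (-(l * y)) * (q y - c))
      ((q x - c - q' x / l) * (l * exp (-(l * x)))) x := by
    intro x
    refine ((hasDerivAt_neg_exp_mul_exp (r := l)).fun_mul ((hq x).sub_const c)).congr_deriv ?_
    field_simp
    ring
  have hsplit : (fun x => if x ≤ t then q x - q' x / l else c)
      = fun x => (if x ≤ t then q x - c - q' x / l else 0) + c := by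
    funext x
    split_ifs <;> ring
  rw [hsplit, integral_add (integrable_ite_le_expMeasure hl (by fun_prop)) (integrable_const c),
    integral_ite_le_expMeasure hl ht, intervalIntegral.integral_eq_sub_of_hasDerivAt
      (fun x _ => hF x) ((by fun_prop : Continuous _).intervalIntegrable _ _)]
  simp only [neg_mul, mul_zero, neg_zero, exp_zero, one_mul, neg_sub, integral_const,
    probReal_univ, smul_eq_mul]
  ring

lemma integral_ite_le_one_expMeasure (hl : 0 < l) (ht : 0 ≤ t) (c : ℝ) :
    ∫ x, (if x ≤ t then 1 else c) ∂expMeasure l = 1 - exp (-(l * t)) * (1 - c) := by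
  simpa using integral_ite_le_expMeasure_of_hasDerivAt hl ht
    (fun x => hasDerivAt_const x (1 : ℝ)) continuous_const c

lemma integral_ite_le_self_expMeasure (hl : 0 < l) (ht : 0 ≤ t) (c : ℝ) :
    ∫ x, (if x ≤ t then x else c) ∂expMeasure l = 1 / l - exp (-(l * t)) * (t + 1 / l - c) := by
  simpa using integral_ite_le_expMeasure_of_hasDerivAt hl ht
    (fun x => (hasDerivAt_id x).add_const (1 / l)) continuous_const c

lemma integral_ite_le_sq_expMeasure (hl : 0 < l) (ht : 0 ≤ t) (c : ℝ) :
    ∫ x, (if x ≤ t then x ^ 2 else c) ∂expMeasure l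
      = 2 / l ^ 2 - exp (-(l * t)) * (t ^ 2 + 2 * t / l + 2 / l ^ 2 - c) := by
  have hq : ∀ x : ℝ, HasDerivAt (fun y => y ^ 2 + 2 * y / l + 2 / l ^ 2) (2 * x + 2 / l) x := by
    intro x
    refine (((hasDerivAt_pow 2 x).fun_add (((hasDerivAt_id' x).const_mul 2).div_const l)).add_const
      (2 / l ^ 2)).congr_deriv ?_
    norm_num
  convert integral_ite_le_expMeasure_of_hasDerivAt hl ht hq (by fun_prop) c using 4 with x
  · field_simp
    ring
  · simp

end ExpMeasure

section Fubini

variable {Ω α β : Type*} [MeasurableSpace Ω] [MeasurableSpace α] [MeasurableSpace β]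
  {P : Measure Ω} [IsFiniteMeasure P] {ν : Measure β} [IsFiniteMeasure ν]

lemma IndepFun.integral_comp_eq_integral_integral {T : Ω → α} {ξ : Ω → β}
    (hTξ : IndepFun T ξ P) (hT : AEMeasurable T P) (hξ : HasLaw ξ ν P) {F : α → β → ℝ}
    (hF : StronglyMeasurable (Function.uncurry F))
    (hFi : Integrable (fun ω => F (T ω) (ξ ω)) P) :
    ∫ ω, F (T ω) (ξ ω) ∂P = ∫ ω, ∫ x, F (T ω) x ∂ν ∂P := by
  have hpair := hTξ.hasLaw_prod (HasLaw.mk hT rfl) hξ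
  have hFi' : Integrable (Function.uncurry F) ((P.map T).prod ν) := by
    rw [← hpair.map_eq]
    exact (integrable_map_measure hF.aestronglyMeasurable hpair.aemeasurable).2 hFi
  calc ∫ ω, F (T ω) (ξ ω) ∂P = ∫ p, Function.uncurry F p ∂(P.map T).prod ν :=
        hpair.integral_comp hF.aestronglyMeasurable
    _ = ∫ t, ∫ x, F t x ∂ν ∂P.map T := integral_prod _ hFi'
    _ = ∫ ω, ∫ x, F (T ω) x ∂ν ∂P :=
        integral_map hT hF.integral_prod_right'.aestronglyMeasurable

end Fubini

section AffineRecursion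

variable {Ω : Type*} [MeasurableSpace Ω] {P : Measure Ω} {X A Γ Γ' : Ω → ℝ}

lemma integrable_of_integrable_sq [IsFiniteMeasure P] (hX : AEStronglyMeasurable X P)
    (hX2 : Integrable (fun ω => X ω ^ 2) P) : Integrable X P :=
  ((memLp_two_iff_integrable_sq hX).2 hX2).integrable one_le_two

lemma integrable_sq_of_eq_add_mul (hX : AEStronglyMeasurable X P) (hA : ∀ ω, |A ω| ≤ 1)
    (hΓ : Integrable (fun ω => Γ ω ^ 2) P) (hΓ' : Integrable (fun ω => Γ' ω ^ 2) P)
    (hrec : ∀ ω, Γ ω = X ω + A ω * Γ' ω) : Integrable (fun ω => X ω ^ 2) P := by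
  refine ((hΓ.add hΓ').const_mul 2).mono' (hX.pow 2) (ae_of_all _ fun ω => ?_)
  have hA2 : A ω ^ 2 ≤ 1 := by rw [← sq_abs]; exact pow_le_one₀ (abs_nonneg _) (hA ω)
  have hXω : X ω = Γ ω - A ω * Γ' ω := by rw [hrec ω]; ring
  rw [Pi.add_apply, Real.norm_eq_abs, abs_of_nonneg (sq_nonneg _), hXω]
  nlinarith [sq_nonneg (Γ ω + A ω * Γ' ω), mul_le_mul_of_nonneg_right hA2 (sq_nonneg (Γ' ω))]

lemma integral_eq_of_eq_add_mul (hX : Integrable X P) (hA : AEStronglyMeasurable A P)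
    (hA1 : ∀ ω, |A ω| ≤ 1) (hΓ' : Integrable Γ' P) (hind : IndepFun A Γ' P)
    (hrec : ∀ ω, Γ ω = X ω + A ω * Γ' ω) :
    ∫ ω, Γ ω ∂P = ∫ ω, X ω ∂P + (∫ ω, A ω ∂P) * ∫ ω, Γ' ω ∂P := by
  simp only [hrec]
  rw [integral_add hX (hΓ'.bdd_mul hA (ae_of_all _ hA1)),
    hind.integral_fun_mul_eq_mul_integral hA hΓ'.aestronglyMeasurable]

lemma integral_sq_eq_of_eq_add_mul [IsFiniteMeasure P] (hXm : Measurable X) (hAm : Measurable A)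
    (hΓ'm : Measurable Γ') (hA1 : ∀ ω, |A ω| ≤ 1) (hind : IndepFun (fun ω => (X ω, A ω)) Γ' P)
    (hX : Integrable (fun ω => X ω ^ 2) P) (hΓ' : Integrable (fun ω => Γ' ω ^ 2) P)
    (hrec : ∀ ω, Γ ω = X ω + A ω * Γ' ω) :
    ∫ ω, Γ ω ^ 2 ∂P = ∫ ω, X ω ^ 2 ∂P + 2 * (∫ ω, X ω * A ω ∂P) * ∫ ω, Γ' ω ∂P
      + (∫ ω, A ω ^ 2 ∂P) * ∫ ω, Γ' ω ^ 2 ∂P := by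
  have hX1 := integrable_of_integrable_sq hXm.aestronglyMeasurable hX
  have hΓ'1 := integrable_of_integrable_sq hΓ'm.aestronglyMeasurable hΓ'
  have hXA : Integrable (fun ω => X ω * A ω) P := by
    simpa only [mul_comm] using hX1.bdd_mul hAm.aestronglyMeasurable (ae_of_all _ hA1)
  have hA2 : ∀ ω, |A ω ^ 2| ≤ 1 := fun ω => by
    rw [abs_pow]; exact pow_le_one₀ (abs_nonneg _) (hA1 ω)
  have hind₁ : IndepFun (fun ω => X ω * A ω) Γ' P :=
    hind.comp (measurable_fst.mul measurable_snd) measurable_id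
  have hind₂ : IndepFun (fun ω => A ω ^ 2) (fun ω => Γ' ω ^ 2) P :=
    hind.comp (measurable_snd.pow_const 2) (measurable_id.pow_const 2)
  have hXAΓ' : Integrable (fun ω => X ω * A ω * Γ' ω) P := hind₁.integrable_mul hXA hΓ'1
  have hexpand : ∀ ω, Γ ω ^ 2 = X ω ^ 2 + 2 * (X ω * A ω * Γ' ω) + A ω ^ 2 * Γ' ω ^ 2 :=
    fun ω => by rw [hrec ω]; ring
  simp only [hexpand]
  rw [integral_add (hX.fun_add (hXAΓ'.const_mul 2))
      (hΓ'.bdd_mul (hAm.pow_const 2).aestronglyMeasurable (ae_of_all _ hA2)),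
    integral_add hX (hXAΓ'.const_mul 2), integral_const_mul,
    hind₁.integral_fun_mul_eq_mul_integral hXA.aestronglyMeasurable hΓ'm.aestronglyMeasurable,
    hind₂.integral_fun_mul_eq_mul_integral (hAm.pow_const 2).aestronglyMeasurable
      (hΓ'm.pow_const 2).aestronglyMeasurable]
  ring

end AffineRecursion

section ExpMeasureIndep

variable {Ω : Type*} [MeasurableSpace Ω] {P : Measure Ω} [IsProbabilityMeasure P] {l : ℝ}
  {T ξ : Ω → ℝ}

lemma integral_comp_eq_of_integral_expMeasure_eq (hl : 0 < l) (hT0 : ∀ ω, 0 ≤ T ω)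
    (hT : Measurable T) (hξ : HasLaw ξ (expMeasure l) P) (hTξ : IndepFun T ξ P)
    {F : ℝ → ℝ → ℝ} (hF : Measurable (Function.uncurry F))
    (hFi : Integrable (fun ω => F (T ω) (ξ ω)) P) {a b c : ℝ}
    (hFt : ∀ t, 0 ≤ t →
      ∫ x, F t x ∂expMeasure l = a + b * exp (-(l * t)) + c * (t * exp (-(l * t)))) :
    ∫ ω, F (T ω) (ξ ω) ∂P
      = a + b * ∫ ω, exp (-(l * T ω)) ∂P + c * ∫ ω, T ω * exp (-(l * T ω)) ∂P := by
  have := isProbabilityMeasure_expMeasure hl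
  have hexp : Integrable (fun ω => exp (-(l * T ω))) P :=
    .of_bound (by fun_prop) 1 (ae_of_all _ fun ω => by
      rw [norm_of_nonneg (exp_nonneg _), exp_le_one_iff, neg_nonpos]
      exact mul_nonneg hl.le (hT0 ω))
  have hmul : Integrable (fun ω => T ω * exp (-(l * T ω))) P :=
    .of_bound (by fun_prop) (1 / l) (ae_of_all _ fun ω => by
      rw [norm_of_nonneg (mul_nonneg (hT0 ω) (exp_nonneg _))]
      exact mul_exp_neg_mul_le hl (T ω))
  rw [hTξ.integral_comp_eq_integral_integral hT.aemeasurable hξ hF.stronglyMeasurable hFi,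
    integral_congr_ae (ae_of_all _ fun ω => hFt (T ω) (hT0 ω)),
    integral_add ((integrable_const a).fun_add (hexp.const_mul b)) (hmul.const_mul c),
    integral_add (integrable_const a) (hexp.const_mul b), integral_const_mul, integral_const_mul]
  simp

lemma integral_ite_le_of_indepFun_expMeasure (hl : 0 < l) (hT0 : ∀ ω, 0 ≤ T ω)
    (hT : Measurable T) (hξ : HasLaw ξ (expMeasure l) P) (hTξ : IndepFun T ξ P) :
    ∫ ω, (if ξ ω ≤ T ω then 1 else 0 : ℝ) ∂P = 1 - ∫ ω, exp (-(l * T ω)) ∂P := by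
  have hFi : Integrable (fun ω => if ξ ω ≤ T ω then (1 : ℝ) else 0) P :=
    .of_bound (measurable_uncurry_ite_le.comp_aemeasurable
      (hT.aemeasurable.prodMk hξ.aemeasurable)).aestronglyMeasurable 1
      (ae_of_all _ fun ω => by split_ifs <;> simp)
  rw [integral_comp_eq_of_integral_expMeasure_eq hl hT0 hT hξ hTξ measurable_uncurry_ite_le hFi
    (a := 1) (b := -1) (c := 0) fun t ht => by rw [integral_ite_le_one_expMeasure hl ht]; ring]
  ring

lemma integral_min_of_indepFun_expMeasure (hl : 0 < l) (hT0 : ∀ ω, 0 ≤ T ω)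
    (hT : Measurable T) (hξ : HasLaw ξ (expMeasure l) P) (hTξ : IndepFun T ξ P)
    (hX : Integrable (fun ω => min (ξ ω) (T ω)) P) :
    ∫ ω, min (ξ ω) (T ω) ∂P = (1 - ∫ ω, exp (-(l * T ω)) ∂P) / l := by
  rw [integral_comp_eq_of_integral_expMeasure_eq hl hT0 hT hξ hTξ (F := fun t x => min x t)
    (by fun_prop) hX (a := 1 / l) (b := -1 / l) (c := 0) fun t ht => by
      simp only [min_def]; rw [integral_ite_le_self_expMeasure hl ht]; ring]
  ring

lemma integral_min_sq_of_indepFun_expMeasure (hl : 0 < l) (hT0 : ∀ ω, 0 ≤ T ω)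
    (hT : Measurable T) (hξ : HasLaw ξ (expMeasure l) P) (hTξ : IndepFun T ξ P)
    (hX2 : Integrable (fun ω => min (ξ ω) (T ω) ^ 2) P) :
    ∫ ω, min (ξ ω) (T ω) ^ 2 ∂P = 2 / l ^ 2 - 2 * (∫ ω, T ω * exp (-(l * T ω)) ∂P) / l
      - 2 * (∫ ω, exp (-(l * T ω)) ∂P) / l ^ 2 := by
  rw [integral_comp_eq_of_integral_expMeasure_eq hl hT0 hT hξ hTξ (F := fun t x => min x t ^ 2)
    (by fun_prop) hX2 (a := 2 / l ^ 2) (b := -2 / l ^ 2) (c := -2 / l) fun t ht => by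
      simp only [min_def, apply_ite (· ^ 2)]; rw [integral_ite_le_sq_expMeasure hl ht]; ring]
  ring

lemma integral_min_mul_ite_le_of_indepFun_expMeasure (hl : 0 < l) (hT0 : ∀ ω, 0 ≤ T ω)
    (hT : Measurable T) (hξ : HasLaw ξ (expMeasure l) P) (hTξ : IndepFun T ξ P)
    (hX : Integrable (fun ω => min (ξ ω) (T ω)) P) :
    ∫ ω, min (ξ ω) (T ω) * (if ξ ω ≤ T ω then 1 else 0) ∂P
      = 1 / l - ∫ ω, T ω * exp (-(l * T ω)) ∂P - (∫ ω, exp (-(l * T ω)) ∂P) / l := by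
  have hF : Measurable (Function.uncurry fun t x : ℝ => min x t * if x ≤ t then 1 else 0) :=
    (measurable_snd.min measurable_fst).mul measurable_uncurry_ite_le
  have hFi : Integrable (fun ω => min (ξ ω) (T ω) * if ξ ω ≤ T ω then 1 else 0) P :=
    hX.mul_bdd (c := 1) (measurable_uncurry_ite_le.comp_aemeasurable
      (hT.aemeasurable.prodMk hξ.aemeasurable)).aestronglyMeasurable
      (ae_of_all _ fun ω => by split_ifs <;> simp)
  have hF_eq : ∀ t, (fun x => min x t * if x ≤ t then (1 : ℝ) else 0)
      = fun x => if x ≤ t then x else 0 := fun t => by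
    funext x
    split_ifs with h <;> simp [h]
  rw [integral_comp_eq_of_integral_expMeasure_eq hl hT0 hT hξ hTξ hF hFi
    (a := 1 / l) (b := -1 / l) (c := -1) fun t ht => by
      rw [hF_eq, integral_ite_le_self_expMeasure hl ht]; ring]
  ring

lemma integral_eq_and_integral_sq_eq_of_eq_min_add_ite_mul {Γ Γ' : Ω → ℝ} (hl : 0 < l)
    (hT0 : ∀ ω, 0 ≤ T ω) (hT : Measurable T) (hξm : Measurable ξ)
    (hξ : HasLaw ξ (expMeasure l) P) (hTξ : IndepFun T ξ P) (hΓ'm : Measurable Γ')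
    (hTξΓ' : IndepFun (fun ω => (T ω, ξ ω)) Γ' P) (hΓ : Integrable (fun ω => Γ ω ^ 2) P)
    (hΓ' : Integrable (fun ω => Γ' ω ^ 2) P)
    (hrec : ∀ ω, Γ ω = min (ξ ω) (T ω) + (if ξ ω ≤ T ω then 1 else 0) * Γ' ω) :
    ∫ ω, Γ ω ∂P = (1 - ∫ ω, exp (-(l * T ω)) ∂P) / l
        + (1 - ∫ ω, exp (-(l * T ω)) ∂P) * ∫ ω, Γ' ω ∂P ∧
      ∫ ω, Γ ω ^ 2 ∂P = 2 / l ^ 2 - 2 * (∫ ω, T ω * exp (-(l * T ω)) ∂P) / l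
        - 2 * (∫ ω, exp (-(l * T ω)) ∂P) / l ^ 2
        + 2 * (1 / l - ∫ ω, T ω * exp (-(l * T ω)) ∂P - (∫ ω, exp (-(l * T ω)) ∂P) / l)
          * ∫ ω, Γ' ω ∂P
        + (1 - ∫ ω, exp (-(l * T ω)) ∂P) * ∫ ω, Γ' ω ^ 2 ∂P := by
  have hXm : Measurable fun ω => min (ξ ω) (T ω) := hξm.min hT
  have hAm : Measurable fun ω => if ξ ω ≤ T ω then (1 : ℝ) else 0 :=
    measurable_uncurry_ite_le.comp (hT.prodMk hξm)
  have hA1 : ∀ ω, |if ξ ω ≤ T ω then (1 : ℝ) else 0| ≤ 1 := fun ω => by split_ifs <;> simp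
  have hind : IndepFun (fun ω => (min (ξ ω) (T ω), if ξ ω ≤ T ω then (1 : ℝ) else 0)) Γ' P :=
    hTξΓ'.comp ((measurable_snd.min measurable_fst).prodMk measurable_uncurry_ite_le)
      measurable_id
  have hX2 := integrable_sq_of_eq_add_mul hXm.aestronglyMeasurable hA1 hΓ hΓ' hrec
  have hX := integrable_of_integrable_sq hXm.aestronglyMeasurable hX2
  have hM1 := integral_eq_of_eq_add_mul hX hAm.aestronglyMeasurable hA1
    (integrable_of_integrable_sq hΓ'm.aestronglyMeasurable hΓ') (hind.comp measurable_snd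
      measurable_id) hrec
  have hM2 := integral_sq_eq_of_eq_add_mul hXm hAm hΓ'm hA1 hind hX2 hΓ' hrec
  simp only [ite_pow, one_pow, zero_pow two_ne_zero] at hM2
  rw [integral_min_of_indepFun_expMeasure hl hT0 hT hξ hTξ hX,
    integral_ite_le_of_indepFun_expMeasure hl hT0 hT hξ hTξ] at hM1
  rw [integral_min_sq_of_indepFun_expMeasure hl hT0 hT hξ hTξ hX2,
    integral_min_mul_ite_le_of_indepFun_expMeasure hl hT0 hT hξ hTξ hX,
    integral_ite_le_of_indepFun_expMeasure hl hT0 hT hξ hTξ] at hM2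
  exact ⟨hM1, hM2⟩

end ExpMeasureIndep

end ProbabilityTheory

theorem dop_gamma_second_moment_general
    {Ω : Type} [MeasureSpace Ω] [IsProbabilityMeasure (ℙ : Measure Ω)]
    {l : ℝ} (hl : 0 < l)
    (T ξ Γ Γ' : Ω → ℝ) (hT0 : ∀ ω, 0 ≤ T ω)
    (hTm : Measurable T) (hξm : Measurable ξ) (hΓm : Measurable Γ) (hΓ'm : Measurable Γ')
    (hξexp : Measure.map ξ ℙ = expMeasure l)
    (hcopy : Measure.map Γ' ℙ = Measure.map Γ ℙ)
    (hindep : iIndepFun ![T, ξ, Γ'] ℙ)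
    (hΓ2int : Integrable (fun ω => (Γ ω) ^ 2) ℙ)
    (hfix : ∀ ω, Γ ω = (if T ω < ξ ω then T ω else ξ ω + Γ' ω))
    (hγpos : 0 < ∫ ω, Real.exp (-(l * T ω)) ∂ℙ) :
    (∫ ω, (Γ ω) ^ 2 ∂ℙ)
      = 2 * (1 - ∫ ω, Real.exp (-(l * T ω)) ∂ℙ)
          / (l ^ 2 * (∫ ω, Real.exp (-(l * T ω)) ∂ℙ) ^ 2)
        - 2 * (∫ ω, T ω * Real.exp (-(l * T ω)) ∂ℙ)
          / (l * (∫ ω, Real.exp (-(l * T ω)) ∂ℙ) ^ 2) := by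
  have hΓ'Γ : IdentDistrib Γ' Γ ℙ ℙ := ⟨hΓ'm.aemeasurable, hΓm.aemeasurable, hcopy⟩
  have hΓ'Γ2 := hΓ'Γ.comp (measurable_id.pow_const 2)
  have hsq : ∫ ω, Γ' ω ^ 2 ∂ℙ = ∫ ω, Γ ω ^ 2 ∂ℙ := hΓ'Γ2.integral_eq
  have hTξ : IndepFun T ξ ℙ := by simpa using hindep.indepFun (show (0 : Fin 3) ≠ 1 by decide)
  have hTξΓ' : IndepFun (fun ω => (T ω, ξ ω)) Γ' ℙ := by
    simpa using hindep.indepFun_prodMk (fun i => by fin_cases i <;> assumption) 0 1 2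
      (by decide) (by decide)
  obtain ⟨hM1, hM2⟩ := integral_eq_and_integral_sq_eq_of_eq_min_add_ite_mul hl hT0 hTm hξm
    ⟨hξm.aemeasurable, hξexp⟩ hTξ hΓ'm hTξΓ' hΓ2int (hΓ'Γ2.integrable_iff.2 hΓ2int)
    fun ω => (hfix ω).trans (ite_lt_eq_min_add_ite_le_mul _ _ _)
  rw [hΓ'Γ.integral_eq] at hM1 hM2
  rw [hsq] at hM2
  set γ := ∫ ω, exp (-(l * T ω)) ∂ℙ
  have hγ := hγpos.ne'
  have hl' := hl.ne'
  field_simp at hM1 hM2 ⊢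
  linear_combination γ * hM2 + 2 * (1 - l * (∫ ω, T ω * exp (-(l * T ω)) ∂ℙ) - γ) * hM1

/-- second moment of the DOP completion time `Γ`:
`E[Γ²] = 2(1−γ)/(λ²γ²) − 2E[T e^{-λT}]/(λγ²)`. -/
theorem dop_gamma_second_moment
    {Ω : Type} [MeasureSpace Ω] [IsProbabilityMeasure (ℙ : Measure Ω)]
    {l : ℝ} (hl : 0 < l)
    (T ξ Γ Γ' : Ω → ℝ) (hT0 : ∀ ω, 0 ≤ T ω)
    (hTm : Measurable T) (hξm : Measurable ξ) (hΓm : Measurable Γ) (hΓ'm : Measurable Γ')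
    (hξexp : Measure.map ξ ℙ = expMeasure l)
    (hcopy : Measure.map Γ' ℙ = Measure.map Γ ℙ)
    (hindep : iIndepFun ![T, ξ, Γ'] ℙ)
    (hTint : Integrable T ℙ) (hΓ2int : Integrable (fun ω => (Γ ω) ^ 2) ℙ)
    (hfix : ∀ ω, Γ ω = (if T ω < ξ ω then T ω else ξ ω + Γ' ω))
    (hγpos : 0 < ∫ ω, Real.exp (-(l * T ω)) ∂ℙ) :
    (∫ ω, (Γ ω) ^ 2 ∂ℙ)
      = 2 * (1 - ∫ ω, Real.exp (-(l * T ω)) ∂ℙ)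
          / (l ^ 2 * (∫ ω, Real.exp (-(l * T ω)) ∂ℙ) ^ 2)
        - 2 * (∫ ω, T ω * Real.exp (-(l * T ω)) ∂ℙ)
          / (l * (∫ ω, Real.exp (-(l * T ω)) ∂ℙ) ^ 2) :=
  dop_gamma_second_moment_general hl T ξ Γ Γ' hT0 hTm hξm hΓm hΓ'm hξexp hcopy hindep hΓ2int hfix
    hγpos
end

section
/- With ρ = λE[T], γ = E[e^{-λT}], d_n = 1/λ + E[T], and d_o = 1/(λγ), the DNP scheme has strictly smaller AAoI than DOP (a_DNP < a_DOP) if and only if d_o − d_n > (E[T²]/(2E[T]))·(ρ/(1+ρ)), equivalently if and only if (E[T²]/(2E[T]²)·ρ²/(1+ρ) + 1 + ρ)·γ < 1. -/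
open MeasureTheory ProbabilityTheory Real

theorem lt_one_div_mul_iff {a l γ : ℝ} (hl : 0 < l) (hγ : 0 < γ) :
    a < 1 / (l * γ) ↔ l * a * γ < 1 := by
  rw [lt_div_iff₀ (mul_pos hl hγ)]
  ring_nf

theorem mul_dnp_age_eq {l ET ET2 : ℝ} (hl : l ≠ 0) (hET : ET ≠ 0) (hρ : 1 + l * ET ≠ 0) :
    l * (ET + 1 / l + ET2 / (2 * ET) * (l * ET / (1 + l * ET)))
      = ET2 / (2 * ET ^ 2) * ((l * ET) ^ 2 / (1 + l * ET)) + 1 + l * ET := by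
  field_simp
  ring

theorem dnp_better_than_dop_iff_general
    {l : ℝ} (hl : 0 < l)
    (ET ET2 γ ρ dn do' aDNP aDOP : ℝ)
    (hγpos : 0 < γ)
    (hETpos : 0 < ET) (hρ : ρ = l * ET)
    (hdn : dn = 1 / l + ET) (hdo : do' = 1 / (l * γ))
    (haDNP : aDNP = ET + 1 / l + ET2 / (2 * ET) * (ρ / (1 + ρ)))
    (haDOP : aDOP = 1 / (l * γ)) :
    (aDNP < aDOP ↔ do' - dn > ET2 / (2 * ET) * (ρ / (1 + ρ)))
    ∧ (aDNP < aDOP ↔ (ET2 / (2 * ET ^ 2) * (ρ ^ 2 / (1 + ρ)) + 1 + ρ) * γ < 1) := by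
  subst hρ hdn hdo haDNP haDOP
  have h1ρ : 1 + l * ET ≠ 0 := by positivity
  refine ⟨⟨fun h => by linarith, fun h => by linarith⟩, ?_⟩
  rw [lt_one_div_mul_iff hl hγpos, mul_dnp_age_eq hl.ne' hETpos.ne' h1ρ]

/-- `a_DNP < a_DOP` iff `d_o − d_n > (E[T²]/(2E[T]))·(ρ/(1+ρ))`
iff `(E[T²]/(2E[T]²)·ρ²/(1+ρ) + 1 + ρ)·γ < 1`. -/
theorem dnp_better_than_dop_iff
    {Ω : Type} [MeasureSpace Ω] [IsProbabilityMeasure (ℙ : Measure Ω)]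
    {l : ℝ} (hl : 0 < l)
    (T : Ω → ℝ) (hT0 : ∀ ω, 0 ≤ T ω) (hTm : Measurable T)
    (hT2 : Integrable (fun ω => (T ω) ^ 2) ℙ)
    (ET ET2 γ ρ dn do' aDNP aDOP : ℝ)
    (hET : ET = ∫ ω, T ω ∂ℙ) (hET2 : ET2 = ∫ ω, (T ω) ^ 2 ∂ℙ)
    (hγ : γ = ∫ ω, Real.exp (-(l * T ω)) ∂ℙ) (hγpos : 0 < γ)
    (hETpos : 0 < ET) (hρ : ρ = l * ET)
    (hdn : dn = 1 / l + ET) (hdo : do' = 1 / (l * γ))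
    (haDNP : aDNP = ET + 1 / l + ET2 / (2 * ET) * (ρ / (1 + ρ)))
    (haDOP : aDOP = 1 / (l * γ)) :
    (aDNP < aDOP ↔ do' - dn > ET2 / (2 * ET) * (ρ / (1 + ρ)))
    ∧ (aDNP < aDOP ↔ (ET2 / (2 * ET ^ 2) * (ρ ^ 2 / (1 + ρ)) + 1 + ρ) * γ < 1) :=
  dnp_better_than_dop_iff_general hl ET ET2 γ ρ dn do' aDNP aDOP hγpos hETpos hρ hdn hdo haDNP haDOP
end

section
/- Consider threshold policies parameterized by π ∈ [0,1] (the stationary probability of selecting DNP) with AAoI lower bound f_o(π) = [ d_o((b_n − b_o)π + b_o) + 0.5(c_n − c_o)π + 0.5 c_o ] / [ (d_n − d_o)π + d_o ]. If d_n ≥ d_o then the numerator of f_o′(π), namely 0.5(c_n d_o − c_o d_n) + d_o(b_n d_o − b_o d_n), is strictly positive, hence f_o is strictly increasing on [0,1] and is minimized at π = 0. -/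
open MeasureTheory ProbabilityTheory Real Set

/-! The derivative of the Möbius map `f_o` has the sign of `a d − b c`, which for `f_o` is the
numerator `N = ½(c_n d_o − c_o d_n) + d_o(b_n d_o − b_o d_n)`. Substituting the moments,
`N = E[T²] / (2λγ) + (d_n − d_o) / (λ²γ)`: the first term is positive because
`E[T²] ≥ E[T]² > 0`, the second is nonnegative because `d_n ≥ d_o`. -/

theorem integral_sq_pos_of_integral_ne_zero {Ω : Type*} [MeasurableSpace Ω] {μ : Measure Ω}
    [IsProbabilityMeasure μ] {X : Ω → ℝ} (hX2 : Integrable (fun ω => X ω ^ 2) μ)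
    (hX : ∫ ω, X ω ∂μ ≠ 0) : 0 < ∫ ω, X ω ^ 2 ∂μ := by
  have hX2' : MemLp X 2 μ :=
    (memLp_two_iff_integrable_sq (Integrable.of_integral_ne_zero hX).aestronglyMeasurable).2 hX2
  have hvar := variance_nonneg X μ
  rw [variance_eq_sub hX2'] at hvar
  have : 0 < (∫ ω, X ω ∂μ) ^ 2 := by positivity
  simp only [Pi.pow_apply] at hvar
  linarith

theorem strictMonoOn_div_affine {a b c d : ℝ} {s : Set ℝ}
    (hden : ∀ x ∈ s, 0 < c * x + d) (hdet : 0 < a * d - b * c) :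
    StrictMonoOn (fun x => (a * x + b) / (c * x + d)) s := by
  intro x hx y hy hxy
  rw [div_lt_div_iff₀ (hden x hx) (hden y hy)]
  have cross : (a * y + b) * (c * x + d) - (a * x + b) * (c * y + d) = (a * d - b * c) * (y - x) := by
    ring
  nlinarith [mul_pos hdet (sub_pos.mpr hxy)]

theorem fo_deriv_numerator_eq {l γ ET ET2 m : ℝ} (hl : l ≠ 0) (hγ : γ ≠ 0) :
    0.5 * ((2 / l ^ 2 + 2 * ET / l + ET2) * (1 / (l * γ))
        - (2 / (l ^ 2 * γ ^ 2) - 2 * m / (l * γ ^ 2)) * (1 / l + ET))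
      + 1 / (l * γ) * (ET * (1 / (l * γ)) - m / γ * (1 / l + ET))
      = ET2 / (2 * (l * γ)) + ((1 / l + ET) - 1 / (l * γ)) / (l ^ 2 * γ) := by
  field_simp
  ring

theorem fo_increasing_dop_optimal_general
    {Ω : Type} [MeasureSpace Ω] [IsProbabilityMeasure (ℙ : Measure Ω)]
    {l : ℝ} (hl : 0 < l)
    (T : Ω → ℝ)
    (hT2 : Integrable (fun ω => (T ω) ^ 2) ℙ)
    (ET ET2 m γ bn bo dn do' cn co : ℝ)
    (hET : ET = ∫ ω, T ω ∂ℙ) (hETpos : 0 < ET)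
    (hET2 : ET2 = ∫ ω, (T ω) ^ 2 ∂ℙ)
    (hγpos : 0 < γ)
    (hbn : bn = ET) (hbo : bo = m / γ)
    (hdn : dn = 1 / l + ET) (hdo : do' = 1 / (l * γ))
    (hcn : cn = 2 / l ^ 2 + 2 * ET / l + ET2)
    (hco : co = 2 / (l ^ 2 * γ ^ 2) - 2 * m / (l * γ ^ 2))
    (fo : ℝ → ℝ)
    (hfo : ∀ x, fo x
        = (do' * ((bn - bo) * x + bo) + 0.5 * (cn - co) * x + 0.5 * co)
          / ((dn - do') * x + do'))
    (hdndo : dn ≥ do') :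
    0 < 0.5 * (cn * do' - co * dn) + do' * (bn * do' - bo * dn)
    ∧ StrictMonoOn fo (Icc (0 : ℝ) 1)
    ∧ ∀ x ∈ Icc (0 : ℝ) 1, fo 0 ≤ fo x := by
  have hET2pos : 0 < ET2 := hET2 ▸ integral_sq_pos_of_integral_ne_zero hT2 (hET ▸ hETpos.ne')
  have hdo_pos : 0 < do' := hdo ▸ by positivity
  have hN : 0 < 0.5 * (cn * do' - co * dn) + do' * (bn * do' - bo * dn) := by
    have hdiff : 0 ≤ (dn - do') / (l ^ 2 * γ) := div_nonneg (sub_nonneg.2 hdndo) (by positivity)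
    rw [hbn, hbo, hcn, hco, hdn, hdo, fo_deriv_numerator_eq hl.ne' hγpos.ne', ← hdn, ← hdo]
    exact add_pos_of_pos_of_nonneg (by positivity) hdiff
  have hfo_affine : fo = fun x => ((do' * (bn - bo) + 0.5 * (cn - co)) * x + (do' * bo + 0.5 * co))
      / ((dn - do') * x + do') := funext fun x => by rw [hfo]; ring
  have hmono : StrictMonoOn fo (Icc 0 1) := hfo_affine ▸ strictMonoOn_div_affine
    (fun x hx => by linarith [mul_nonneg (sub_nonneg.2 hdndo) hx.1]) (by linarith)
  exact ⟨hN, hmono, fun x hx => hmono.monotoneOn ⟨le_rfl, zero_le_one⟩ hx hx.1⟩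

/-- if `d_n ≥ d_o` then the numerator of `f_o′`,
`0.5(c_n d_o − c_o d_n) + d_o(b_n d_o − b_o d_n)`, is strictly positive, hence the
lower bound `f_o` is strictly increasing on `[0,1]` and minimized at `π = 0`. -/
theorem fo_increasing_dop_optimal
    {Ω : Type} [MeasureSpace Ω] [IsProbabilityMeasure (ℙ : Measure Ω)]
    {l : ℝ} (hl : 0 < l)
    (T : Ω → ℝ) (hT0 : ∀ ω, 0 ≤ T ω) (hTm : Measurable T)
    (hT2 : Integrable (fun ω => (T ω) ^ 2) ℙ)
    (ET ET2 m γ bn bo dn do' cn co : ℝ)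
    (hET : ET = ∫ ω, T ω ∂ℙ) (hETpos : 0 < ET)
    (hET2 : ET2 = ∫ ω, (T ω) ^ 2 ∂ℙ)
    (hm : m = ∫ ω, T ω * Real.exp (-(l * T ω)) ∂ℙ)
    (hγ : γ = ∫ ω, Real.exp (-(l * T ω)) ∂ℙ) (hγpos : 0 < γ) (hγlt : γ < 1)
    (hbn : bn = ET) (hbo : bo = m / γ)
    (hdn : dn = 1 / l + ET) (hdo : do' = 1 / (l * γ))
    (hcn : cn = 2 / l ^ 2 + 2 * ET / l + ET2)
    (hco : co = 2 / (l ^ 2 * γ ^ 2) - 2 * m / (l * γ ^ 2))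
    (fo : ℝ → ℝ)
    (hfo : ∀ x, fo x
        = (do' * ((bn - bo) * x + bo) + 0.5 * (cn - co) * x + 0.5 * co)
          / ((dn - do') * x + do'))
    (hdndo : dn ≥ do') :
    0 < 0.5 * (cn * do' - co * dn) + do' * (bn * do' - bo * dn)
    ∧ StrictMonoOn fo (Icc (0 : ℝ) 1)
    ∧ ∀ x ∈ Icc (0 : ℝ) 1, fo 0 ≤ fo x :=
  fo_increasing_dop_optimal_general hl T hT2 ET ET2 m γ bn bo dn do' cn co hET hETpos hET2 hγpos hbn
    hbo hdn hdo hcn hco fo hfo hdndo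
end
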